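/- arXiv:2601.17537 — 2 statements merged into one kernel-verified Lean document; each statement's English description precedes it below -/
import Mathlib

section
/- For every gST-automaton 𝒜 without silent transitions there exists a gST-automaton 𝒜' with L(𝒜') = L(𝒜) that satisfies conditions (a)–(d): (a) no transition enters an initial state; (b) no transition leaves an accepting state; (c) every transition labelled ⟨S,U,T⟩ with T = U has its target in the accepting states; (d) every transition labelled ⟨S,U,T⟩ with S = U has its source in the initial states. -/
open scoped Classical

namespace HDA

/-! ### Ipomsets over a fixed alphabet -/

structure PreIpomset (σ : Type) : Type 1 where
  carrier : Type
  fin : Finite carrier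
  lt : carrier → carrier → Prop
  evord : carrier → carrier → Prop
  S : Set carrier
  T : Set carrier
  lab : carrier → σ

namespace PreIpomset

variable {σ : Type}

/-- The precedence order is empty. -/
def Discrete (P : PreIpomset σ) : Prop := ∀ x y, ¬ P.lt x y

/-- Validity: `lt` is a strict partial order which is an interval order, `evord` is acyclic,
for distinct events exactly one of the four relations holds, sources are minimal and
targets are maximal.  (All ipomsets considered are interval.) -/
structure IsIpomset (P : PreIpomset σ) : Prop where
  lt_trans : ∀ x y z, P.lt x y → P.lt y z → P.lt x z
  lt_irrefl : ∀ x, ¬ P.lt x x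
  evord_acyclic : ∀ x, ¬ Relation.TransGen P.evord x x
  total : ∀ x y : P.carrier, x ≠ y → P.lt x y ∨ P.lt y x ∨ P.evord x y ∨ P.evord y x
  lt_not_evord : ∀ x y, P.lt x y → ¬ P.evord x y ∧ ¬ P.evord y x
  src_min : ∀ x ∈ P.S, ∀ y, ¬ P.lt y x
  tgt_max : ∀ x ∈ P.T, ∀ y, ¬ P.lt x y
  interval : ∀ w x y z, P.lt w x → P.lt y z → P.lt w z ∨ P.lt y x

/-- A conclist: a discrete ipomset with empty interfaces. -/
def IsConclist (P : PreIpomset σ) : Prop :=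
  P.IsIpomset ∧ P.Discrete ∧ P.S = ∅ ∧ P.T = ∅

/-- A starter `⟨U∖A,U,U⟩`. -/
def IsStarter (P : PreIpomset σ) : Prop := P.IsIpomset ∧ P.Discrete ∧ P.T = Set.univ

/-- A terminator `⟨U,U,U∖B⟩`. -/
def IsTerminator (P : PreIpomset σ) : Prop := P.IsIpomset ∧ P.Discrete ∧ P.S = Set.univ

/-- An identity `⟨U,U,U⟩`. -/
def IsIdentityIpomset (P : PreIpomset σ) : Prop :=
  P.IsIpomset ∧ P.Discrete ∧ P.S = Set.univ ∧ P.T = Set.univ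

def IsProperStarter (P : PreIpomset σ) : Prop := P.IsStarter ∧ P.S ≠ Set.univ

def IsProperTerminator (P : PreIpomset σ) : Prop := P.IsTerminator ∧ P.T ≠ Set.univ

/-- Isomorphism of (pre)ipomsets. -/
def Iso (P Q : PreIpomset σ) : Prop :=
  ∃ f : P.carrier ≃ Q.carrier,
    (∀ x y, P.lt x y ↔ Q.lt (f x) (f y)) ∧
    (∀ x y, P.evord x y ↔ Q.evord (f x) (f y)) ∧
    (∀ x, x ∈ P.S ↔ f x ∈ Q.S) ∧
    (∀ x, x ∈ P.T ↔ f x ∈ Q.T) ∧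
    (∀ x, Q.lab (f x) = P.lab x)

/-- Restriction to a subset of events, with empty interfaces. -/
def restrict (P : PreIpomset σ) (K : Set P.carrier) : PreIpomset σ where
  carrier := {x : P.carrier // x ∈ K}
  fin := by haveI := P.fin; exact inferInstance
  lt := fun x y => P.lt x.val y.val
  evord := fun x y => P.evord x.val y.val
  S := ∅
  T := ∅
  lab := fun x => P.lab x.val

/-- The source interface of `P` as a conclist. -/
def srcIface (P : PreIpomset σ) : PreIpomset σ := P.restrict P.S

/-- The target interface of `P` as a conclist. -/
def tgtIface (P : PreIpomset σ) : PreIpomset σ := P.restrict P.T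

/-- The underlying conclist (forget interfaces). -/
def conclistOf (P : PreIpomset σ) : PreIpomset σ := { P with S := ∅, T := ∅ }

/-- The identity ipomset `⟨U,U,U⟩` on the conclist underlying `P`. -/
def idOf (P : PreIpomset σ) : PreIpomset σ := { P with S := Set.univ, T := Set.univ }

/-- The discrete ipomset `⟨S,U,T⟩` on the conclist underlying `P`. -/
def withIfaces (P : PreIpomset σ) (S T : Set P.carrier) : PreIpomset σ :=
  { P with S := S, T := T }

/-- The starter `⟨U∖A,U,U⟩` on the conclist underlying `P`. -/
def starter (P : PreIpomset σ) (A : Set P.carrier) : PreIpomset σ :=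
  { P with S := Aᶜ, T := Set.univ }

/-- The terminator `⟨U,U,U∖B⟩` on the conclist underlying `P`. -/
def terminator (P : PreIpomset σ) (B : Set P.carrier) : PreIpomset σ :=
  { P with S := Set.univ, T := Bᶜ }

/-- A matching `T_P ≅ S_Q`, i.e. an isomorphism of interface conclists
along which `P` and `Q` may be glued. -/
structure Matching (P Q : PreIpomset σ) : Type where
  g : {x : P.carrier // x ∈ P.T} ≃ {y : Q.carrier // y ∈ Q.S}
  evord_iff : ∀ x y, P.evord x.val y.val ↔ Q.evord (g x).val (g y).val
  lab_eq : ∀ x, Q.lab (g x).val = P.lab x.val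

def gluePOf (P Q : PreIpomset σ) :
    P.carrier ⊕ {y : Q.carrier // y ∉ Q.S} → Option P.carrier
  | Sum.inl x => some x
  | Sum.inr _ => none

noncomputable def glueQOf (P Q : PreIpomset σ) (m : Matching P Q) :
    P.carrier ⊕ {y : Q.carrier // y ∉ Q.S} → Option Q.carrier
  | Sum.inl x => if h : x ∈ P.T then some (m.g ⟨x, h⟩).val else none
  | Sum.inr y => some y.val

/-- The gluing `P * Q` along a matching `T_P ≅ S_Q`. -/
noncomputable def glue (P Q : PreIpomset σ) (m : Matching P Q) : PreIpomset σ where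
  carrier := P.carrier ⊕ {y : Q.carrier // y ∉ Q.S}
  fin := by haveI := P.fin; haveI := Q.fin; exact inferInstance
  lt := fun u v =>
    (∃ x x', gluePOf P Q u = some x ∧ gluePOf P Q v = some x' ∧ P.lt x x') ∨
    (∃ y y', glueQOf P Q m u = some y ∧ glueQOf P Q m v = some y' ∧ Q.lt y y') ∨
    ((∃ x, gluePOf P Q u = some x ∧ x ∉ P.T) ∧
     (∃ y, glueQOf P Q m v = some y ∧ y ∉ Q.S))
  evord := fun u v =>
    (∃ x x', gluePOf P Q u = some x ∧ gluePOf P Q v = some x' ∧ P.evord x x') ∨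
    (∃ y y', glueQOf P Q m u = some y ∧ glueQOf P Q m v = some y' ∧ Q.evord y y')
  S := {u | ∃ x, gluePOf P Q u = some x ∧ x ∈ P.S}
  T := {u | ∃ y, glueQOf P Q m u = some y ∧ y ∈ Q.T}
  lab := Sum.elim P.lab fun y => Q.lab y.val

/-- `R` is (isomorphic to) the gluing `P * Q`; in particular `T_P ≅ S_Q`. -/
def GlueRel (P Q R : PreIpomset σ) : Prop :=
  ∃ m : Matching P Q, Iso (glue P Q m) R

/-- A choice of gluing (used when a matching is known to exist). -/
noncomputable def glueChoice (P Q : PreIpomset σ) : PreIpomset σ :=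
  if h : Nonempty (Matching P Q) then glue P Q h.some else P

/-- `GluesTo l R`: `R` is the gluing of the nonempty list `l` of ipomsets. -/
inductive GluesTo : List (PreIpomset σ) → PreIpomset σ → Prop
  | single {P R : PreIpomset σ} : Iso P R → GluesTo [P] R
  | cons {P : PreIpomset σ} {l : List (PreIpomset σ)} {R' R : PreIpomset σ} :
      GluesTo l R' → GlueRel P R' R → GluesTo (P :: l) R

/-- Proper starters and proper terminators alternate. -/
def Alternating (l : List (PreIpomset σ)) : Prop :=
  l.Chain' fun P Q => (IsProperStarter P ∧ IsProperTerminator Q) ∨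
    (IsProperTerminator P ∧ IsProperStarter Q)

/-- `l` is a sparse step decomposition of `R`: either a single identity, or an
alternating sequence of proper starters and proper terminators gluing to `R`. -/
def IsSparseDecomp (l : List (PreIpomset σ)) (R : PreIpomset σ) : Prop :=
  GluesTo l R ∧
  ((∃ I, l = [I] ∧ IsIdentityIpomset I) ∨
   ((∀ P ∈ l, IsProperStarter P ∨ IsProperTerminator P) ∧ Alternating l))

/-- `P ∈ iPoms^q`: the sparse step decomposition of `P` does not end with a
proper starter (i.e. it ends with a terminator or is a single identity). -/
def InQ (P : PreIpomset σ) : Prop :=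
  ∃ l, IsSparseDecomp l P ∧ ∀ Q, l.getLast? = some Q → ¬ IsProperStarter Q

end PreIpomset

open PreIpomset

variable {σ : Type}

/-! ### Languages and rational operations -/

def glueLang (L M : Set (PreIpomset σ)) : Set (PreIpomset σ) :=
  {R | ∃ P ∈ L, ∃ Q ∈ M, GlueRel P Q R}

def powLang (L : Set (PreIpomset σ)) : ℕ → Set (PreIpomset σ)
  | 0 => L
  | n + 1 => glueLang L (powLang L n)

/-- `L⁺ = ⋃_{n ≥ 1} Lⁿ`. -/
def plusLang (L : Set (PreIpomset σ)) : Set (PreIpomset σ) := ⋃ n, powLang L n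

/-- Rational languages of (interval) ipomsets: generated from `∅` and singletons
(up to isomorphism) of starters and terminators by union, gluing composition and plus. -/
inductive Rational : Set (PreIpomset σ) → Prop
  | empty : Rational ∅
  | single {P : PreIpomset σ} : IsStarter P ∨ IsTerminator P → Rational {Q | Iso Q P}
  | union {L M : Set (PreIpomset σ)} : Rational L → Rational M → Rational (L ∪ M)
  | concat {L M : Set (PreIpomset σ)} : Rational L → Rational M → Rational (glueLang L M)
  | plus {L : Set (PreIpomset σ)} : Rational L → Rational (plusLang L)

/-! ### P-automata -/

structure PAutomaton (σ : Type) : Type 1 where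
  Q : Type
  E : Type
  src : E → Q
  tgt : E → Q
  lab : E → PreIpomset σ
  mu : Q → PreIpomset σ
  start : Set Q
  accept : Set Q

namespace PAutomaton

variable {σ : Type}

/-- The axioms of a P-automaton: finite sets of states and transitions, states
labelled by conclists, transitions by interval ipomsets, with
`μ(s(e)) ≅ S_{λ(e)}` and `μ(t(e)) ≅ T_{λ(e)}`. -/
def IsPA (A : PAutomaton σ) : Prop :=
  Finite A.Q ∧ Finite A.E ∧
  (∀ q, (A.mu q).IsConclist) ∧ (∀ e, (A.lab e).IsIpomset) ∧
  (∀ e, Iso (A.lab e).srcIface (A.mu (A.src e))) ∧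
  (∀ e, Iso (A.lab e).tgtIface (A.mu (A.tgt e)))

/-- ST-automaton: every label is a starter or a terminator. -/
def IsST (A : PAutomaton σ) : Prop := ∀ e, IsStarter (A.lab e) ∨ IsTerminator (A.lab e)

/-- gST-automaton: every label is discrete. -/
def IsGST (A : PAutomaton σ) : Prop := ∀ e, (A.lab e).Discrete

/-- No transition is labelled by an identity. -/
def NoSilent (A : PAutomaton σ) : Prop := ∀ e, ¬ IsIdentityIpomset (A.lab e)

/-- A reduced gST-automaton: no silent transitions and conditions (a)–(f). -/
def Reduced (A : PAutomaton σ) : Prop :=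
  NoSilent A ∧
  (∀ e, A.tgt e ∉ A.start) ∧
  (∀ e, A.src e ∉ A.accept) ∧
  (∀ e, (A.lab e).T = Set.univ → A.tgt e ∈ A.accept) ∧
  (∀ e, (A.lab e).S = Set.univ → A.src e ∈ A.start) ∧
  (∀ e e', A.src e ∈ A.start → A.src e' = A.src e → e' = e) ∧
  (∀ e e', A.tgt e ∈ A.accept → A.tgt e' = A.tgt e → e' = e)

/-- Paths in a P-automaton, from a state to a state. -/
inductive Path (A : PAutomaton σ) : A.Q → A.Q → Type
  | nil (q : A.Q) : Path A q q
  | cons (e : A.E) {r : A.Q} (rest : Path A (A.tgt e) r) : Path A (A.src e) r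

/-- The (interval) ipomset recognized by a path, up to isomorphism:
the gluing of the labels of its transitions (an identity for a constant path). -/
inductive Rec {A : PAutomaton σ} : ∀ {p r : A.Q}, Path A p r → PreIpomset σ → Prop
  | nil (q : A.Q) (R : PreIpomset σ) : Iso (A.mu q).idOf R → Rec (Path.nil q) R
  | cons (e : A.E) {r : A.Q} (rest : Path A (A.tgt e) r) {R' R : PreIpomset σ} :
      Rec rest R' → GlueRel (A.lab e) R' R → Rec (Path.cons e rest) R

/-- The language of a P-automaton. -/
def lang (A : PAutomaton σ) : Set (PreIpomset σ) :=
  {R | ∃ p r, ∃ α : Path A p r, p ∈ A.start ∧ r ∈ A.accept ∧ Rec α R}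

/-- Dimension of a transition. -/
noncomputable def dim (A : PAutomaton σ) (e : A.E) : ℕ := Nat.card (A.lab e).carrier

/-- Number of bad starter transitions of dimension `n`. -/
noncomputable def bst (A : PAutomaton σ) (n : ℕ) : ℕ :=
  Nat.card {e : A.E // IsProperStarter (A.lab e) ∧ A.tgt e ∉ A.accept ∧ A.dim e = n}

/-- Number of bad terminator transitions of dimension `n`. -/
noncomputable def btt (A : PAutomaton σ) (n : ℕ) : ℕ :=
  Nat.card {e : A.E // IsProperTerminator (A.lab e) ∧ A.src e ∉ A.start ∧ A.dim e = n}

/-- The automaton `𝒜_c`: remove the starter transition `c`; for every transition `e`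
out of `t(c)` add a transition `e*` from `s(c)` to `t(e)` labelled `λ(c) * λ(e)`. -/
noncomputable def Ac (A : PAutomaton σ) (c : A.E) : PAutomaton σ where
  Q := A.Q
  E := {e : A.E // e ≠ c} ⊕ {e : A.E // A.src e = A.tgt c}
  src := Sum.elim (fun e => A.src e.val) fun _ => A.src c
  tgt := Sum.elim (fun e => A.tgt e.val) fun e => A.tgt e.val
  lab := Sum.elim (fun e => A.lab e.val) fun e => glueChoice (A.lab c) (A.lab e.val)
  mu := A.mu
  start := A.start
  accept := A.accept

/-- Disjoint union of two P-automata. -/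
def sumAut (A B : PAutomaton σ) : PAutomaton σ where
  Q := A.Q ⊕ B.Q
  E := A.E ⊕ B.E
  src := Sum.elim (Sum.inl ∘ A.src) (Sum.inr ∘ B.src)
  tgt := Sum.elim (Sum.inl ∘ A.tgt) (Sum.inr ∘ B.tgt)
  lab := Sum.elim A.lab B.lab
  mu := Sum.elim A.mu B.mu
  start := Sum.inl '' A.start ∪ Sum.inr '' B.start
  accept := Sum.inl '' A.accept ∪ Sum.inr '' B.accept

/-- Concatenation `𝒜 * ℬ`: disjoint union together with identity-labelled transitions
from accepting states of `𝒜` to initial states of `ℬ` with isomorphic state labels. -/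
def concatAut (A B : PAutomaton σ) : PAutomaton σ where
  Q := A.Q ⊕ B.Q
  E := A.E ⊕ B.E ⊕
    {pq : A.Q × B.Q // pq.1 ∈ A.accept ∧ pq.2 ∈ B.start ∧ Iso (A.mu pq.1) (B.mu pq.2)}
  src := Sum.elim (Sum.inl ∘ A.src)
    (Sum.elim (Sum.inr ∘ B.src) fun pq => Sum.inl pq.val.1)
  tgt := Sum.elim (Sum.inl ∘ A.tgt)
    (Sum.elim (Sum.inr ∘ B.tgt) fun pq => Sum.inr pq.val.2)
  lab := Sum.elim A.lab (Sum.elim B.lab fun pq => (A.mu pq.val.1).idOf)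
  mu := Sum.elim A.mu B.mu
  start := Sum.inl '' A.start
  accept := Sum.inr '' B.accept

/-- Kleene plus `𝒜⁺`: add identity-labelled transitions from accepting states
to initial states with isomorphic state labels. -/
def plusAut (A : PAutomaton σ) : PAutomaton σ where
  Q := A.Q
  E := A.E ⊕
    {pq : A.Q × A.Q // pq.1 ∈ A.accept ∧ pq.2 ∈ A.start ∧ Iso (A.mu pq.1) (A.mu pq.2)}
  src := Sum.elim A.src fun pq => pq.val.1
  tgt := Sum.elim A.tgt fun pq => pq.val.2
  lab := Sum.elim A.lab fun pq => (A.mu pq.val.1).idOf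
  mu := A.mu
  start := A.start
  accept := A.accept

end PAutomaton

/-! ### Partial HDAs -/

/-- `g` exhibits `V` as the sub-conclist of `U` obtained by removing the events in `K`. -/
def IsFaceEmbed (U : PreIpomset σ) (K : Set U.carrier) (V : PreIpomset σ)
    (g : V.carrier → U.carrier) : Prop :=
  Function.Injective g ∧ Set.range g = Kᶜ ∧
  (∀ u v, V.evord u v ↔ U.evord (g u) (g v)) ∧
  (∀ u, U.lab (g u) = V.lab u)

/-- The data of a partial higher-dimensional automaton: cells labelled by conclists,
partial face maps, initial and accepting cells. -/
structure PrePHDA (σ : Type) : Type 1 where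
  cell : Type
  ev : cell → PreIpomset σ
  face : (x : cell) → Set (ev x).carrier → Set (ev x).carrier → Option cell
  start : Set cell
  accept : Set cell

namespace PrePHDA

variable {σ : Type}

/-- The lax precubical identity: whenever `δ_{A,B}(x)` and `δ_{C,D}(δ_{A,B}(x))` are
defined, `δ_{A∪C,B∪D}(x)` is defined and equal to the composite. -/
def IsLax (X : PrePHDA σ) : Prop :=
  ∀ x (A B : Set (X.ev x).carrier) y, X.face x A B = some y →
    ∀ g, IsFaceEmbed (X.ev x) (A ∪ B) (X.ev y) g →
      ∀ (C D : Set (X.ev y).carrier) z, X.face y C D = some z →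
        X.face x (A ∪ g '' C) (B ∪ g '' D) = some z

/-- The axioms of a partial HDA. -/
def IsPHDA (X : PrePHDA σ) : Prop :=
  (∀ x, (X.ev x).IsConclist) ∧
  (∀ x, X.face x ∅ ∅ = some x) ∧
  (∀ x A B y, X.face x A B = some y →
    Disjoint A B ∧ ∃ g, IsFaceEmbed (X.ev x) (A ∪ B) (X.ev y) g) ∧
  IsLax X

/-- Strictness: `δ_{C,D} ∘ δ_{A,B} = δ_{A∪C,B∪D}` as partial functions. -/
def IsStrict (X : PrePHDA σ) : Prop :=
  IsPHDA X ∧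
  (∀ x (A B : Set (X.ev x).carrier) y, X.face x A B = some y →
    ∀ g, IsFaceEmbed (X.ev x) (A ∪ B) (X.ev y) g →
      ∀ C D : Set (X.ev y).carrier,
        X.face x (A ∪ g '' C) (B ∪ g '' D) = X.face y C D) ∧
  (∀ x (A B C D : Set (X.ev x).carrier),
    Disjoint (A ∪ C) (B ∪ D) → C ∪ D ⊆ (A ∪ B)ᶜ →
    X.face x A B = none → X.face x (A ∪ C) (B ∪ D) = none)

/-- Paths in a partial HDA: sequences of upsteps and downsteps. -/
inductive Path (X : PrePHDA σ) : X.cell → X.cell → Type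
  | nil (x : X.cell) : Path X x x
  | up {x z : X.cell} (y : X.cell) (A : Set (X.ev y).carrier)
      (h : X.face y A ∅ = some x) (rest : Path X y z) : Path X x z
  | down {z w : X.cell} (y : X.cell) (B : Set (X.ev y).carrier)
      (h : X.face y ∅ B = some z) (rest : Path X z w) : Path X y w

/-- Directions of the steps of a path (`true` = upstep). -/
def Path.dirs {X : PrePHDA σ} : {x z : X.cell} → Path X x z → List Bool
  | _, _, .nil _ => []
  | _, _, .up _ _ _ rest => true :: rest.dirs
  | _, _, .down _ _ _ rest => false :: rest.dirs

/-- A path is sparse if upsteps and downsteps alternate. -/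
def Path.Sparse {X : PrePHDA σ} {x z : X.cell} (α : Path X x z) : Prop :=
  α.dirs.Chain' (· ≠ ·)

/-- Concatenation of paths. -/
def Path.comp {X : PrePHDA σ} : {x y z : X.cell} → Path X x y → Path X y z → Path X x z
  | _, _, _, .nil _, β => β
  | _, _, _, .up y A h rest, β => .up y A h (rest.comp β)
  | _, _, _, .down y B h rest, β => .down y B h (rest.comp β)

/-- The ipomset recognized by a path, up to isomorphism: the gluing of the starters
and terminators of its steps (an identity for a constant path). -/
inductive Rec {X : PrePHDA σ} : ∀ {x z : X.cell}, Path X x z → PreIpomset σ → Prop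
  | nil (x : X.cell) (R : PreIpomset σ) :
      Iso (X.ev x).idOf R → Rec (Path.nil x) R
  | up {x z : X.cell} (y : X.cell) (A : Set (X.ev y).carrier)
      (h : X.face y A ∅ = some x) (rest : Path X y z) {R' R : PreIpomset σ} :
      Rec rest R' → GlueRel ((X.ev y).starter A) R' R → Rec (Path.up y A h rest) R
  | down {z w : X.cell} (y : X.cell) (B : Set (X.ev y).carrier)
      (h : X.face y ∅ B = some z) (rest : Path X z w) {R' R : PreIpomset σ} :
      Rec rest R' → GlueRel ((X.ev y).terminator B) R' R → Rec (Path.down y B h rest) R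

/-- The language of a partial HDA. -/
def lang (X : PrePHDA σ) : Set (PreIpomset σ) :=
  {R | ∃ x z, ∃ α : Path X x z, x ∈ X.start ∧ z ∈ X.accept ∧ Rec α R}

/-- `X(K,P)`: cells reachable from `K` by a path recognizing `P`. -/
def track (X : PrePHDA σ) (K : Set X.cell) (P : PreIpomset σ) : Set X.cell :=
  {x | ∃ s, ∃ α : Path X s x, s ∈ K ∧ Rec α P}

/-- Deterministic partial HDA: at most one initial cell per conclist, and lower
face maps are "injective" in the appropriate sense. -/
def Deterministic (X : PrePHDA σ) : Prop :=
  (∀ x y, x ∈ X.start → y ∈ X.start → Iso (X.ev x) (X.ev y) → x = y) ∧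
  (∀ (y y' : X.cell) (A : Set (X.ev y).carrier) (A' : Set (X.ev y').carrier)
      (x : X.cell), X.face y A ∅ = some x → X.face y' A' ∅ = some x →
    (∃ f : (X.ev y).carrier ≃ (X.ev y').carrier,
      (∀ u v, (X.ev y).evord u v ↔ (X.ev y').evord (f u) (f v)) ∧
      (∀ u, (X.ev y').lab (f u) = (X.ev y).lab u) ∧ f '' A = A') → y = y')

end PrePHDA

/-! ### Relational HDAs -/

/-- The data of a relational HDA: face relations instead of partial face maps. -/
structure PreRHDA (σ : Type) : Type 1 where
  cell : Type
  ev : cell → PreIpomset σ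
  face : (x : cell) → Set (ev x).carrier → Set (ev x).carrier → Set cell
  start : Set cell
  accept : Set cell

namespace PreRHDA

variable {σ : Type}

/-- The axioms of a relational HDA, with the lax precubical identity
`δ_{C,D} ∘ δ_{A,B} ⊆ δ_{A∪C,B∪D}`. -/
def IsRHDA (X : PreRHDA σ) : Prop :=
  (∀ x, (X.ev x).IsConclist) ∧
  (∀ x, X.face x ∅ ∅ = {x}) ∧
  (∀ x A B y, y ∈ X.face x A B →
    Disjoint A B ∧ ∃ g, IsFaceEmbed (X.ev x) (A ∪ B) (X.ev y) g) ∧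
  (∀ x (A B : Set (X.ev x).carrier) y, y ∈ X.face x A B →
    ∀ g, IsFaceEmbed (X.ev x) (A ∪ B) (X.ev y) g →
      ∀ (C D : Set (X.ev y).carrier) z, z ∈ X.face y C D →
        z ∈ X.face x (A ∪ g '' C) (B ∪ g '' D))

/-- Paths in a relational HDA. -/
inductive Path (X : PreRHDA σ) : X.cell → X.cell → Type 1
  | nil (x : X.cell) : Path X x x
  | up {x z : X.cell} (y : X.cell) (A : Set (X.ev y).carrier)
      (h : x ∈ X.face y A ∅) (rest : Path X y z) : Path X x z
  | down {z w : X.cell} (y : X.cell) (B : Set (X.ev y).carrier)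
      (h : z ∈ X.face y ∅ B) (rest : Path X z w) : Path X y w

/-- The ipomset recognized by a path in a relational HDA. -/
inductive Rec {X : PreRHDA σ} : ∀ {x z : X.cell}, Path X x z → PreIpomset σ → Prop
  | nil (x : X.cell) (R : PreIpomset σ) :
      Iso (X.ev x).idOf R → Rec (Path.nil x) R
  | up {x z : X.cell} (y : X.cell) (A : Set (X.ev y).carrier)
      (h : x ∈ X.face y A ∅) (rest : Path X y z) {R' R : PreIpomset σ} :
      Rec rest R' → GlueRel ((X.ev y).starter A) R' R → Rec (Path.up y A h rest) R
  | down {z w : X.cell} (y : X.cell) (B : Set (X.ev y).carrier)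
      (h : z ∈ X.face y ∅ B) (rest : Path X z w) {R' R : PreIpomset σ} :
      Rec rest R' → GlueRel ((X.ev y).terminator B) R' R → Rec (Path.down y B h rest) R

/-- The language of a relational HDA. -/
def lang (X : PreRHDA σ) : Set (PreIpomset σ) :=
  {R | ∃ x z, ∃ α : Path X x z, x ∈ X.start ∧ z ∈ X.accept ∧ Rec α R}

/-- The ST-automaton `ST(X)` of a relational HDA `X`: states are cells, transitions
mimic the starting and terminating of events. -/
def stAut (X : PreRHDA σ) : PAutomaton σ where
  Q := X.cell
  E := (Σ q : X.cell, Σ A : Set (X.ev q).carrier, {p : X.cell // p ∈ X.face q A ∅}) ⊕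
       (Σ q : X.cell, Σ B : Set (X.ev q).carrier, {r : X.cell // r ∈ X.face q ∅ B})
  src := Sum.elim (fun t => t.2.2.val) fun t => t.1
  tgt := Sum.elim (fun t => t.1) fun t => t.2.2.val
  lab := Sum.elim (fun t => (X.ev t.1).starter t.2.1) fun t => (X.ev t.1).terminator t.2.1
  mu := X.ev
  start := X.start
  accept := X.accept

end PreRHDA

/-! ### The partial HDA of a reduced gST-automaton -/

open PAutomaton

/-- The cell representing a state `q` in `X(𝒜)`: `q` is merged with a terminator
transition out of it or a starter transition into it, if such exists. -/
noncomputable def cellOfState (A : PAutomaton σ) (q : A.Q) : A.E ⊕ A.Q :=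
  if h : ∃ e, IsTerminator (A.lab e) ∧ A.src e = q then Sum.inl h.choose
  else if h' : ∃ e, IsStarter (A.lab e) ∧ A.tgt e = q then Sum.inl h'.choose
  else Sum.inr q

/-- `X(𝒜)`: cells are `(Q ⊔ E)/∼`, with the only defined (nontrivial) face maps
`δ⁰_{U∖S}([e]) = [s(e)]` and `δ¹_{U∖T}([e]) = [t(e)]` for `λ(e) = ⟨S,U,T⟩`. -/
noncomputable def XofA (A : PAutomaton σ) : PrePHDA σ where
  cell := A.E ⊕ A.Q
  ev := Sum.elim (fun e => (A.lab e).conclistOf) A.mu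
  face := fun x =>
    match x with
    | Sum.inl e => fun As Bs =>
        if As = ∅ ∧ Bs = ∅ then some (Sum.inl e)
        else if As = (A.lab e).Sᶜ ∧ Bs = ∅ then some (cellOfState A (A.src e))
        else if As = ∅ ∧ Bs = (A.lab e).Tᶜ then some (cellOfState A (A.tgt e))
        else none
    | Sum.inr q => fun As Bs =>
        if As = ∅ ∧ Bs = ∅ then some (Sum.inr q) else none
  start := cellOfState A '' A.start
  accept := cellOfState A '' A.accept

end HDA

/-!
A path of `𝒜` is read in blocks: a transition joins the current block when the block only
starts events (`T = U`) or the transition only terminates events (`S = U`). Since all labels are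
discrete, gluing such a pair only changes an interface, `⟨S,U,U⟩ * ⟨U,V,T⟩ ≅ ⟨S,V,T⟩` and
`⟨S,U,T⟩ * ⟨T,T,T'⟩ ≅ ⟨S,U,T'⟩`, so every block is labelled by a discrete ipomset on the
conclist of one of its transitions, and there are finitely many of those. The transitions of
`𝒜'` are the blocks, from a copy of a state in phase `initial` or `middle` to one in phase
`middle` or `final`. Blocks are only cut where the left one does not end with `T = U` and the
right one does not start with `S = U`, which gives (a)–(d). The languages agree because gluing is
associative and, transitions being labelled by ipomsets, a path recognizes a unique ipomset up
to isomorphism.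
-/
namespace HDA

theorem exists_exists_prop {p : Prop} {q : p → Prop} {r : (∃ h, q h) → Prop} :
    (∃ h : (∃ h : p, q h), r h) ↔ ∃ (h : p) (h' : q h), r ⟨h, h'⟩ :=
  ⟨fun ⟨⟨h, h'⟩, hr⟩ => ⟨h, h', hr⟩, fun ⟨h, h', hr⟩ => ⟨⟨h, h'⟩, hr⟩⟩

namespace PreIpomset
variable {σ : Type}

theorem Iso.refl (P : PreIpomset σ) : Iso P P :=
  ⟨Equiv.refl _, fun _ _ => .rfl, fun _ _ => .rfl, fun _ => .rfl, fun _ => .rfl, fun _ => rfl⟩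

theorem Iso.symm {P Q : PreIpomset σ} : Iso P Q → Iso Q P := by
  rintro ⟨f, hlt, hev, hS, hT, hlab⟩
  refine ⟨f.symm, fun x y => ?_, fun x y => ?_, fun x => ?_, fun x => ?_, fun x => ?_⟩
  · simp [hlt]
  · simp [hev]
  · simp [hS]
  · simp [hT]
  · simp [← hlab]

theorem Iso.trans {P Q R : PreIpomset σ} : Iso P Q → Iso Q R → Iso P R := by
  rintro ⟨f, flt, fev, fS, fT, flab⟩ ⟨g, glt, gev, gS, gT, glab⟩
  exact ⟨f.trans g, fun x y => (flt x y).trans (glt _ _), fun x y => (fev x y).trans (gev _ _),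
    fun x => (fS x).trans (gS _), fun x => (fT x).trans (gT _), fun x => (glab _).trans (flab _)⟩

theorem Iso.srcIface {P P' : PreIpomset σ} : Iso P P' → Iso P.srcIface P'.srcIface := by
  rintro ⟨f, flt, fev, fS, -, flab⟩
  exact ⟨f.subtypeEquiv fS, fun (x y : {x // x ∈ P.S}) => flt x y,
    fun (x y : {x // x ∈ P.S}) => fev x y, fun _ => .rfl, fun _ => .rfl,
    fun (x : {x // x ∈ P.S}) => flab x⟩

theorem Iso.tgtIface {P P' : PreIpomset σ} : Iso P P' → Iso P.tgtIface P'.tgtIface := by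
  rintro ⟨f, flt, fev, -, fT, flab⟩
  exact ⟨f.subtypeEquiv fT, fun (x y : {x // x ∈ P.T}) => flt x y,
    fun (x y : {x // x ∈ P.T}) => fev x y, fun _ => .rfl, fun _ => .rfl,
    fun (x : {x // x ∈ P.T}) => flab x⟩

theorem Iso.S_eq_univ {P P' : PreIpomset σ} (h : Iso P P') (hS : P'.S = Set.univ) :
    P.S = Set.univ := by
  obtain ⟨f, -, -, fS, -, -⟩ := h
  exact Set.eq_univ_of_forall fun x => (fS x).2 (hS ▸ Set.mem_univ _)

def SrcMin (P : PreIpomset σ) : Prop := ∀ x ∈ P.S, ∀ y, ¬ P.lt y x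

def TgtMax (P : PreIpomset σ) : Prop := ∀ x ∈ P.T, ∀ y, ¬ P.lt x y

theorem Discrete.srcMin {P : PreIpomset σ} (h : P.Discrete) : P.SrcMin := fun _ _ y => h y _

theorem Discrete.tgtMax {P : PreIpomset σ} (h : P.Discrete) : P.TgtMax := fun x _ _ => h x _

theorem IsIpomset.withIfaces {P : PreIpomset σ} (hP : P.IsIpomset) (hd : P.Discrete)
    (S T : Set P.carrier) : (P.withIfaces S T).IsIpomset where
  lt_trans := hP.lt_trans
  lt_irrefl := hP.lt_irrefl
  evord_acyclic := hP.evord_acyclic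
  total := hP.total
  lt_not_evord := hP.lt_not_evord
  src_min _ _ y h := hd y _ h
  tgt_max x _ _ h := hd x _ h
  interval w x _ _ h _ := (hd w x h).elim

theorem IsIpomset.isWellOrder_evord_T {P : PreIpomset σ} (hP : P.IsIpomset) :
    IsWellOrder {x // x ∈ P.T} (fun a b => P.evord a b) := by
  have := P.fin
  have total : ∀ a b : {x // x ∈ P.T}, a ≠ b → P.evord a b ∨ P.evord b a := fun a b hab => by
    rcases hP.total a b (fun h => hab (Subtype.ext h)) with h | h | h | h
    · exact (hP.tgt_max _ a.2 _ h).elim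
    · exact (hP.tgt_max _ b.2 _ h).elim
    · exact .inl h
    · exact .inr h
  have : IsTrans _ fun a b : {x // x ∈ P.T} => P.evord a b := ⟨fun a b c hab hbc => by
    by_cases hac : a = c
    · subst hac
      exact (hP.evord_acyclic _ (.tail (.single hab) hbc)).elim
    · exact (total a c hac).resolve_right fun hca =>
        hP.evord_acyclic _ (.tail (.tail (.single hab) hbc) hca)⟩
  have : Std.Irrefl fun a b : {x // x ∈ P.T} => P.evord a b :=
    ⟨fun a h => hP.evord_acyclic _ (.single h)⟩
  exact { wf := Finite.wellFounded_of_trans_of_irrefl _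
          trichotomous := fun a b h h' => by_contra fun hab => (total a b hab).elim h h' }

theorem iso_srcIface_idOf {X : PreIpomset σ} (hX : X.IsConclist) : Iso X.idOf.srcIface X := by
  obtain ⟨-, -, hS, hT⟩ := hX
  refine ⟨Equiv.Set.univ X.carrier, fun _ _ => .rfl, fun _ _ => .rfl, fun _ => iff_of_false id ?_,
    fun _ => iff_of_false id ?_, fun _ => rfl⟩
  · rw [hS]; exact id
  · rw [hT]; exact id

theorem iso_tgtIface_idOf {X : PreIpomset σ} (hX : X.IsConclist) : Iso X.idOf.tgtIface X :=
  iso_srcIface_idOf hX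

section Glue
variable {P Q : PreIpomset σ} (m : Matching P Q)

@[simp] theorem gluePOf_inl (x : P.carrier) : gluePOf P Q (.inl x) = some x := rfl

@[simp] theorem gluePOf_inr (y : {y // y ∉ Q.S}) : gluePOf P Q (.inr y) = none := rfl

@[simp] theorem glueQOf_inr (y : {y // y ∉ Q.S}) : glueQOf P Q m (.inr y) = some y.1 := rfl

@[simp] theorem glueQOf_inl_eq_some {x : P.carrier} {y : Q.carrier} :
    glueQOf P Q m (.inl x) = some y ↔ ∃ h : x ∈ P.T, (m.g ⟨x, h⟩).1 = y := by
  simp [glueQOf]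

@[simp] theorem glue_lt_inl_inl (x x' : P.carrier) :
    (glue P Q m).lt (.inl x) (.inl x') ↔
      P.lt x x' ∨ ∃ (h : x ∈ P.T) (h' : x' ∈ P.T), Q.lt (m.g ⟨x, h⟩) (m.g ⟨x', h'⟩) := by
  simp only [glue]; simp

@[simp] theorem glue_lt_inl_inr (x : P.carrier) (y : {y // y ∉ Q.S}) :
    (glue P Q m).lt (.inl x) (.inr y) ↔ (∃ h : x ∈ P.T, Q.lt (m.g ⟨x, h⟩) y) ∨ x ∉ P.T := by
  simp only [glue]; simp [y.2]

@[simp] theorem glue_lt_inr_inl (y : {y // y ∉ Q.S}) (x : P.carrier) :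
    (glue P Q m).lt (.inr y) (.inl x) ↔ ∃ h : x ∈ P.T, Q.lt y (m.g ⟨x, h⟩) := by
  simp only [glue]; simp

@[simp] theorem glue_lt_inr_inr (y y' : {y // y ∉ Q.S}) :
    (glue P Q m).lt (.inr y) (.inr y') ↔ Q.lt y y' := by
  simp only [glue]; simp

@[simp] theorem glue_evord_inl_inl (x x' : P.carrier) :
    (glue P Q m).evord (.inl x) (.inl x') ↔ P.evord x x' := by
  simp only [glue]; simp only [gluePOf_inl, Option.some.injEq, glueQOf_inl_eq_some]
  constructor
  · rintro (⟨_, _, rfl, rfl, h⟩ | ⟨_, _, ⟨hx, rfl⟩, ⟨hx', rfl⟩, h⟩)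
    · exact h
    · exact (m.evord_iff ⟨x, hx⟩ ⟨x', hx'⟩).2 h
  · exact fun h => .inl ⟨x, x', rfl, rfl, h⟩

@[simp] theorem glue_evord_inl_inr (x : P.carrier) (y : {y // y ∉ Q.S}) :
    (glue P Q m).evord (.inl x) (.inr y) ↔ ∃ h : x ∈ P.T, Q.evord (m.g ⟨x, h⟩) y := by
  simp only [glue]; simp

@[simp] theorem glue_evord_inr_inl (y : {y // y ∉ Q.S}) (x : P.carrier) :
    (glue P Q m).evord (.inr y) (.inl x) ↔ ∃ h : x ∈ P.T, Q.evord y (m.g ⟨x, h⟩) := by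
  simp only [glue]; simp

@[simp] theorem glue_evord_inr_inr (y y' : {y // y ∉ Q.S}) :
    (glue P Q m).evord (.inr y) (.inr y') ↔ Q.evord y y' := by
  simp only [glue]; simp

/- The element type of the membership is given explicitly: otherwise it would be elaborated as
the `Sum` type underlying `(glue P Q m).carrier`, and the lemmas would not fire on goals about
elements of the gluing. -/

@[simp] theorem inl_mem_glue_S (x : P.carrier) :
    Membership.mem (α := (glue P Q m).carrier) (glue P Q m).S (.inl x) ↔ x ∈ P.S := by
  show (∃ _, _) ↔ _; simp

@[simp] theorem inr_mem_glue_S (y : {y // y ∉ Q.S}) :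
    Membership.mem (α := (glue P Q m).carrier) (glue P Q m).S (.inr y) ↔ False := by
  show (∃ _, _) ↔ _; simp

@[simp] theorem inl_mem_glue_T (x : P.carrier) :
    Membership.mem (α := (glue P Q m).carrier) (glue P Q m).T (.inl x) ↔
      ∃ h : x ∈ P.T, (m.g ⟨x, h⟩).1 ∈ Q.T := by
  show (∃ _, _) ↔ _; simp

@[simp] theorem inr_mem_glue_T (y : {y // y ∉ Q.S}) :
    Membership.mem (α := (glue P Q m).carrier) (glue P Q m).T (.inr y) ↔ y.1 ∈ Q.T := by
  show (∃ _, _) ↔ _; simp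

@[simp] theorem glue_lab_inl (x : P.carrier) : (glue P Q m).lab (.inl x) = P.lab x := rfl

@[simp] theorem glue_lab_inr (y : {y // y ∉ Q.S}) : (glue P Q m).lab (.inr y) = Q.lab y := rfl

theorem glue_S_eq_univ (h : (glue P Q m).S = Set.univ) : P.S = Set.univ :=
  Set.eq_univ_of_forall fun x => (inl_mem_glue_S m x).1 (h ▸ Set.mem_univ _)

-- The `dite` is typed at the underlying `Sum`, so that `dif_pos` and `dif_neg` rewrite it.
noncomputable def glueOfRight (y : Q.carrier) : (glue P Q m).carrier :=
  (if h : y ∈ Q.S then .inl (m.g.symm ⟨y, h⟩) else .inr ⟨y, h⟩ : P.carrier ⊕ {y // y ∉ Q.S})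

@[simp] theorem glueOfRight_g (a : {x // x ∈ P.T}) : glueOfRight m (m.g a).1 = .inl a.1 := by
  rw [glueOfRight, dif_pos (m.g a).2, Subtype.coe_eta, Equiv.symm_apply_apply]

@[simp] theorem glueOfRight_val (y : {y // y ∉ Q.S}) : glueOfRight m y.1 = .inr y := by
  rw [glueOfRight, dif_neg y.2]

theorem glueOfRight_cases (y : Q.carrier) : (∃ a : {x // x ∈ P.T}, (m.g a).1 = y) ∨ y ∉ Q.S := by
  by_cases h : y ∈ Q.S
  · exact .inl ⟨m.g.symm ⟨y, h⟩, by simp⟩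
  · exact .inr h

theorem glueQOf_glueOfRight (y : Q.carrier) : glueQOf P Q m (glueOfRight m y) = some y := by
  rcases glueOfRight_cases m y with ⟨a, rfl⟩ | h
  · rw [glueOfRight_g]; simp
  · rw [glueOfRight_val m ⟨y, h⟩]; rfl

theorem glueOfRight_of_glueQOf {u : (glue P Q m).carrier} {y : Q.carrier}
    (h : glueQOf P Q m u = some y) : glueOfRight m y = u := by
  rcases u with x | y'
  · obtain ⟨hx, rfl⟩ := (glueQOf_inl_eq_some m).1 h
    exact glueOfRight_g m ⟨x, hx⟩
  · cases h
    exact glueOfRight_val m y'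

theorem glueOfRight_injective : Function.Injective (glueOfRight m) := fun y y' h => by
  simpa [h, glueQOf_glueOfRight] using (glueQOf_glueOfRight m y).symm

theorem glueOfRight_mem_T {y : Q.carrier} : glueOfRight m y ∈ (glue P Q m).T ↔ y ∈ Q.T := by
  constructor
  · rintro ⟨y', h, hT⟩
    rw [glueQOf_glueOfRight, Option.some.injEq] at h
    exact h ▸ hT
  · exact fun h => ⟨y, glueQOf_glueOfRight m y, h⟩

theorem glue_lt_glueOfRight (hP : P.TgtMax) (y y' : Q.carrier) :
    (glue P Q m).lt (glueOfRight m y) (glueOfRight m y') ↔ Q.lt y y' := by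
  rcases glueOfRight_cases m y with ⟨a, rfl⟩ | h <;>
    rcases glueOfRight_cases m y' with ⟨a', rfl⟩ | h'
  · simp [hP a.1 a.2 a'.1]
  · rw [glueOfRight_g, glueOfRight_val m ⟨y', h'⟩]; simp
  · rw [glueOfRight_g, glueOfRight_val m ⟨y, h⟩]; simp
  · rw [glueOfRight_val m ⟨y, h⟩, glueOfRight_val m ⟨y', h'⟩]; simp

theorem glue_evord_glueOfRight (y y' : Q.carrier) :
    (glue P Q m).evord (glueOfRight m y) (glueOfRight m y') ↔ Q.evord y y' := by
  rcases glueOfRight_cases m y with ⟨a, rfl⟩ | h <;>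
    rcases glueOfRight_cases m y' with ⟨a', rfl⟩ | h'
  · simp [m.evord_iff]
  · rw [glueOfRight_g, glueOfRight_val m ⟨y', h'⟩]; simp
  · rw [glueOfRight_g, glueOfRight_val m ⟨y, h⟩]; simp
  · rw [glueOfRight_val m ⟨y, h⟩, glueOfRight_val m ⟨y', h'⟩]; simp

@[simp] theorem glue_lab_glueOfRight (y : Q.carrier) :
    (glue P Q m).lab (glueOfRight m y) = Q.lab y := by
  rcases glueOfRight_cases m y with ⟨a, rfl⟩ | h
  · rw [glueOfRight_g]; simp [m.lab_eq]
  · rw [glueOfRight_val m ⟨y, h⟩]; simp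

noncomputable def glueTEquiv : {y // y ∈ Q.T} ≃ {u // u ∈ (glue P Q m).T} :=
  Equiv.ofBijective (fun y => ⟨glueOfRight m y, (glueOfRight_mem_T m).2 y.2⟩)
    ⟨fun _ _ h => Subtype.ext (glueOfRight_injective m (congrArg Subtype.val h)),
     fun ⟨_, y, h, hT⟩ => ⟨⟨y, hT⟩, Subtype.ext (glueOfRight_of_glueQOf m h)⟩⟩

@[simp] theorem glueTEquiv_apply (y : {y // y ∈ Q.T}) :
    (glueTEquiv m y).1 = glueOfRight m y := rfl

def glueSEquiv : {x // x ∈ P.S} ≃ {u // u ∈ (glue P Q m).S} where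
  toFun x := ⟨.inl x.1, (inl_mem_glue_S m x.1).2 x.2⟩
  invFun
    | ⟨.inl x, h⟩ => ⟨x, (inl_mem_glue_S m x).1 h⟩
    | ⟨.inr y, h⟩ => ((inr_mem_glue_S m y).1 h).elim
  left_inv _ := rfl
  right_inv := by
    rintro ⟨x | y, h⟩
    · rfl
    · exact ((inr_mem_glue_S m y).1 h).elim

def glueNotSEquiv : {x // x ∉ P.S} ⊕ {y // y ∉ Q.S} ≃ {u // u ∉ (glue P Q m).S} where
  toFun
    | .inl x => ⟨.inl x.1, fun h => x.2 ((inl_mem_glue_S m x.1).1 h)⟩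
    | .inr y => ⟨.inr y, fun h => (inr_mem_glue_S m y).1 h⟩
  invFun
    | ⟨.inl x, h⟩ => .inl ⟨x, fun h' => h ((inl_mem_glue_S m x).2 h')⟩
    | ⟨.inr y, _⟩ => .inr y
  left_inv := by rintro (x | y) <;> rfl
  right_inv := by rintro ⟨x | y, h⟩ <;> rfl

theorem srcMin_glue (hP : P.SrcMin) (hQ : Q.SrcMin) : (glue P Q m).SrcMin := by
  rintro (x | y) hx (x' | y') hlt
  · simp only [inl_mem_glue_S] at hx
    simp only [glue_lt_inl_inl] at hlt
    obtain hlt | ⟨_, _, hlt⟩ := hlt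
    · exact hP x hx x' hlt
    · exact hQ _ (m.g _).2 _ hlt
  · simp only [glue_lt_inr_inl] at hlt
    obtain ⟨_, hlt⟩ := hlt
    exact hQ _ (m.g _).2 _ hlt
  all_goals simp at hx

theorem tgtMax_glue (hP : P.TgtMax) (hQ : Q.TgtMax) : (glue P Q m).TgtMax := by
  rintro (x | y) hx (x' | y') hlt
  · simp only [inl_mem_glue_T] at hx
    simp only [glue_lt_inl_inl] at hlt
    obtain ⟨hxT, hx⟩ := hx
    obtain hlt | ⟨_, _, hlt⟩ := hlt
    · exact hP x hxT x' hlt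
    · exact hQ _ hx _ hlt
  · simp only [inl_mem_glue_T] at hx
    simp only [glue_lt_inl_inr] at hlt
    obtain ⟨hxT, hx⟩ := hx
    obtain ⟨_, hlt⟩ | hlt := hlt
    · exact hQ _ hx _ hlt
    · exact hlt hxT
  · simp only [inr_mem_glue_T] at hx
    simp only [glue_lt_inr_inl] at hlt
    obtain ⟨_, hlt⟩ := hlt
    exact hQ _ hx _ hlt
  · simp only [inr_mem_glue_T] at hx
    simp only [glue_lt_inr_inr] at hlt
    exact hQ _ hx _ hlt

theorem srcIface_glue (hQ : Q.SrcMin) : Iso P.srcIface (glue P Q m).srcIface := by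
  refine ⟨glueSEquiv m, fun (x x' : {x // x ∈ P.S}) => ?_, fun (x x' : {x // x ∈ P.S}) => ?_,
    fun _ => .rfl, fun _ => .rfl, fun _ => rfl⟩
  · show P.lt x x' ↔ (glue P Q m).lt (.inl x.1) (.inl x'.1)
    simp only [glue_lt_inl_inl]
    exact ⟨.inl, fun h => h.elim id fun ⟨_, _, hlt⟩ => (hQ _ (m.g _).2 _ hlt).elim⟩
  · exact (glue_evord_inl_inl m x x').symm

theorem tgtIface_glue (hP : P.TgtMax) : Iso Q.tgtIface (glue P Q m).tgtIface :=
  ⟨glueTEquiv m, fun (y y' : {y // y ∈ Q.T}) => (glue_lt_glueOfRight m hP y y').symm,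
    fun (y y' : {y // y ∈ Q.T}) => (glue_evord_glueOfRight m y y').symm, fun _ => .rfl,
    fun _ => .rfl, fun (y : {y // y ∈ Q.T}) => glue_lab_glueOfRight m y⟩

theorem glue_congr {P' Q' : PreIpomset σ} (hP : Iso P P') (hQ : Iso Q Q') :
    ∃ m' : Matching P' Q', Iso (glue P Q m) (glue P' Q' m') := by
  obtain ⟨f, flt, fev, fS, fT, flab⟩ := hP
  obtain ⟨g, glt, gev, gS, gT, glab⟩ := hQ
  let m' : Matching P' Q' :=
    { g := (f.subtypeEquiv fT).symm.trans (m.g.trans (g.subtypeEquiv gS))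
      evord_iff := fun x y => by
        obtain ⟨x, rfl⟩ := (f.subtypeEquiv fT).surjective x
        obtain ⟨y, rfl⟩ := (f.subtypeEquiv fT).surjective y
        simp [← fev, ← gev, m.evord_iff]
      lab_eq := fun x => by
        obtain ⟨x, rfl⟩ := (f.subtypeEquiv fT).surjective x
        simp [glab, flab, m.lab_eq] }
  have hm' : ∀ x (h : f x ∈ P'.T), (m'.g ⟨f x, h⟩).1 = g (m.g ⟨x, (fT x).2 h⟩).1 := by
    simp [m']
  let F : (glue P Q m).carrier ≃ (glue P' Q' m').carrier :=
    Equiv.sumCongr f (g.subtypeEquiv fun y => not_congr (gS y))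
  have hFl : ∀ x, F (.inl x) = .inl (f x) := fun _ => rfl
  have hFr : ∀ y : {y // y ∉ Q.S}, F (.inr y) = .inr ⟨g y, fun h => y.2 ((gS y).2 h)⟩ :=
    fun _ => rfl
  refine ⟨m', F, ?_, ?_, ?_, ?_, ?_⟩
  · rintro (x | y) (x' | y') <;> simp only [hFl, hFr] <;> simp [hm', ← flt, ← glt, ← fT]
  · rintro (x | y) (x' | y') <;> simp only [hFl, hFr] <;> simp [hm', ← fev, ← gev, ← fT]
  · rintro (x | y)
    · rw [hFl]; simp [← fS]
    · rw [hFr]; simp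
  · rintro (x | y)
    · rw [hFl]; simp [hm', ← fT, ← gT]
    · rw [hFr]; simp [← gT]
  · rintro (x | y)
    · rw [hFl]; simp [flab]
    · rw [hFr]; simp [glab]

theorem glue_assoc {R : PreIpomset σ} (mR : Matching (glue P Q m) R) :
    ∃ (m₁ : Matching Q R) (m₂ : Matching P (glue Q R m₁)),
      Iso (glue (glue P Q m) R mR) (glue P (glue Q R m₁) m₂) := by
  let m₁ : Matching Q R :=
    { g := (glueTEquiv m).trans mR.g
      evord_iff := fun y y' => by
        simp only [Equiv.trans_apply, ← mR.evord_iff]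
        exact (glue_evord_glueOfRight m y y').symm
      lab_eq := fun y => by simp [mR.lab_eq] }
  have hm₁ : ∀ y (h : y ∈ Q.T),
      (m₁.g ⟨y, h⟩).1 = (mR.g ⟨glueOfRight m y, (glueOfRight_mem_T m).2 h⟩).1 := fun _ _ => rfl
  let m₂ : Matching P (glue Q R m₁) :=
    { g := m.g.trans (glueSEquiv m₁)
      evord_iff := fun x x' => by simp [glueSEquiv, m.evord_iff]
      lab_eq := fun x => by simp [glueSEquiv, m.lab_eq] }
  have hm₂ : ∀ a, (m₂.g a).1 = .inl (m.g a).1 := fun _ => rfl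
  let F : (glue (glue P Q m) R mR).carrier ≃ (glue P (glue Q R m₁) m₂).carrier :=
    (Equiv.sumAssoc _ _ _).trans ((Equiv.refl _).sumCongr (glueNotSEquiv m₁))
  have hF₁ : ∀ x, F (.inl (.inl x)) = .inl x := fun _ => rfl
  have hF₂ : ∀ y : {y // y ∉ Q.S}, F (.inl (.inr y)) =
      .inr ⟨.inl y.1, fun h => y.2 ((inl_mem_glue_S m₁ y.1).1 h)⟩ := fun _ => rfl
  have hF₃ : ∀ r : {r // r ∉ R.S}, F (.inr r) =
      .inr ⟨.inr r, fun h => (inr_mem_glue_S m₁ r).1 h⟩ := fun _ => rfl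
  -- The outer gluing has to be unfolded before the events of `P * Q` are split.
  refine ⟨m₁, m₂, F, ?_, ?_, ?_, ?_, ?_⟩ <;> intro u <;> (try intro u') <;>
    rcases u with u | r <;> (try rcases u' with u' | r') <;>
    simp only [glue_lt_inl_inl, glue_lt_inl_inr, glue_lt_inr_inl, glue_lt_inr_inr,
      glue_evord_inl_inl, glue_evord_inl_inr, glue_evord_inr_inl, glue_evord_inr_inr,
      inl_mem_glue_S, inr_mem_glue_S, inl_mem_glue_T, inr_mem_glue_T, glue_lab_inl,
      glue_lab_inr] <;>
    (try rcases u with x | y) <;> (try rcases u' with x' | y') <;>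
    simp only [hF₁, hF₂, hF₃] <;> simp [hm₁, hm₂, exists_exists_prop] <;> grind

def Matching.sourceImage : Set Q.carrier := {y | ∃ h : y ∈ Q.S, (m.g.symm ⟨y, h⟩).1 ∈ P.S}

def Matching.targetPreimage : Set P.carrier := {x | ∃ h : x ∈ P.T, (m.g ⟨x, h⟩).1 ∈ Q.T}

theorem glueOfRight_mem_S {y : Q.carrier} :
    glueOfRight m y ∈ (glue P Q m).S ↔ y ∈ m.sourceImage := by
  rcases glueOfRight_cases m y with ⟨a, rfl⟩ | h
  · rw [glueOfRight_g]; simp [Matching.sourceImage]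
  · rw [glueOfRight_val m ⟨y, h⟩]; simp [Matching.sourceImage, h]

theorem sourceImage_of_S_eq_univ (hS : P.S = Set.univ) : m.sourceImage = Q.S := by
  ext y; simp [Matching.sourceImage, hS]

theorem targetPreimage_of_T_eq_univ (hT : Q.T = Set.univ) : m.targetPreimage = P.T := by
  ext x; simp [Matching.targetPreimage, hT]

theorem iso_glue_of_T_eq_univ (hd : P.Discrete) (hT : P.T = Set.univ) :
    Iso (Q.withIfaces m.sourceImage Q.T) (glue P Q m) := by
  have hsurj : Function.Surjective (glueOfRight m) := by
    rintro (x | y)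
    · exact ⟨_, glueOfRight_g m ⟨x, hT ▸ Set.mem_univ x⟩⟩
    · exact ⟨_, glueOfRight_val m y⟩
  exact ⟨.ofBijective _ ⟨glueOfRight_injective m, hsurj⟩,
    fun y y' => (glue_lt_glueOfRight m hd.tgtMax y y').symm,
    fun y y' => (glue_evord_glueOfRight m y y').symm, fun _ => (glueOfRight_mem_S m).symm,
    fun _ => (glueOfRight_mem_T m).symm, glue_lab_glueOfRight m⟩

theorem iso_glue_of_S_eq_univ (hd : Q.Discrete) (hS : Q.S = Set.univ) :
    Iso (glue P Q m) (P.withIfaces P.S m.targetPreimage) := by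
  have : IsEmpty {y // y ∉ Q.S} := ⟨fun y => y.2 (Set.eq_univ_iff_forall.1 hS y)⟩
  refine ⟨Equiv.sumEmpty _ _, ?_, ?_, ?_, ?_, ?_⟩
  · rintro (x | y) (x' | y')
    · show _ ↔ P.lt x x'
      simp only [glue_lt_inl_inl]
      exact or_iff_left fun ⟨_, _, h⟩ => hd _ _ h
    all_goals exact isEmptyElim ‹{y // y ∉ Q.S}›
  · rintro (x | y) (x' | y')
    · exact glue_evord_inl_inl m x x'
    all_goals exact isEmptyElim ‹{y // y ∉ Q.S}›
  · rintro (x | y)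
    · exact inl_mem_glue_S m x
    · exact isEmptyElim y
  · rintro (x | y)
    · exact inl_mem_glue_T m x
    · exact isEmptyElim y
  · rintro (x | y)
    · rfl
    · exact isEmptyElim y

end Glue

theorem iso_glue_idOf_left {P Q : PreIpomset σ} (hd : P.Discrete) (m : Matching P.idOf Q) :
    Iso (glue P.idOf Q m) Q := by
  have := (iso_glue_of_T_eq_univ m hd rfl).symm
  rwa [sourceImage_of_S_eq_univ m rfl] at this

theorem iso_glue_idOf_right {P Q : PreIpomset σ} (hd : Q.Discrete) (m : Matching P Q.idOf) :
    Iso (glue P Q.idOf m) P := by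
  have := iso_glue_of_S_eq_univ m hd rfl
  rwa [targetPreimage_of_T_eq_univ m rfl] at this

/-- A matching is determined by the event orders alone, as these are well-orders on the
interfaces. -/
theorem Matching.subsingleton {P Q : PreIpomset σ} (hP : P.IsIpomset) :
    Subsingleton (Matching P Q) := by
  have := hP.isWellOrder_evord_T
  let toRelIso (m : Matching P Q) : (fun a b : {y // y ∈ Q.S} => Q.evord a b) ≃r
      (fun a b : {x // x ∈ P.T} => P.evord a b) :=
    ⟨m.g.symm, fun {a b} => by rw [m.evord_iff]; simp⟩
  refine ⟨fun m m' => ?_⟩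
  have h : m.g.symm = m'.g.symm :=
    Equiv.ext (InitialSeg.eq (toRelIso m).toInitialSeg (toRelIso m').toInitialSeg)
  obtain ⟨g, _, _⟩ := m
  obtain ⟨g', _, _⟩ := m'
  obtain rfl : g = g' := by simpa using congrArg Equiv.symm h
  rfl

theorem Matching.nonempty {P Q X : PreIpomset σ} (hP : Iso P.tgtIface X)
    (hQ : Iso Q.srcIface X) : Nonempty (Matching P Q) := by
  obtain ⟨f, -, fev, -, -, flab⟩ := hP
  obtain ⟨g, -, gev, -, -, glab⟩ := hQ
  refine ⟨⟨f.trans g.symm, fun x y => ?_, fun x => ?_⟩⟩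
  · have hg := gev (g.symm (f x)) (g.symm (f y))
    rw [Equiv.apply_symm_apply, Equiv.apply_symm_apply] at hg
    exact (fev x y).trans hg.symm
  · have hg := glab (g.symm (f x))
    rw [Equiv.apply_symm_apply] at hg
    exact hg.symm.trans (flab x)

end PreIpomset

namespace PAutomaton
open PreIpomset
variable {σ : Type} {A : PAutomaton σ}

theorem IsPA.isConclist (hA : A.IsPA) (q : A.Q) : (A.mu q).IsConclist := hA.2.2.1 q

theorem IsPA.isIpomset (hA : A.IsPA) (e : A.E) : (A.lab e).IsIpomset := hA.2.2.2.1 e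

theorem IsPA.srcIface (hA : A.IsPA) (e : A.E) : Iso (A.lab e).srcIface (A.mu (A.src e)) :=
  hA.2.2.2.2.1 e

theorem IsPA.tgtIface (hA : A.IsPA) (e : A.E) : Iso (A.lab e).tgtIface (A.mu (A.tgt e)) :=
  hA.2.2.2.2.2 e

def Path.append : {p q r : A.Q} → Path A p q → Path A q r → Path A p r
  | _, _, _, .nil _, β => β
  | _, _, _, .cons e rest, β => .cons e (rest.append β)

@[simp] theorem Path.append_nil : ∀ {p q : A.Q} (α : Path A p q), α.append (.nil q) = α
  | _, _, .nil _ => rfl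
  | _, _, .cons e rest => congrArg (Path.cons e) rest.append_nil

theorem Path.append_assoc : ∀ {p q r s : A.Q} (α : Path A p q) (β : Path A q r) (γ : Path A r s),
    (α.append β).append γ = α.append (β.append γ)
  | _, _, _, _, .nil _, _, _ => rfl
  | _, _, _, _, .cons e rest, β, γ => congrArg (Path.cons e) (rest.append_assoc β γ)

theorem Rec.iso {p q : A.Q} {α : Path A p q} {R R' : PreIpomset σ} (h : Rec α R)
    (hR : Iso R R') : Rec α R' := by
  cases h with
  | nil _ _ hs => exact .nil _ R' (hs.trans hR)
  | cons e rest h₁ h₂ =>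
    obtain ⟨m, hm⟩ := h₂
    exact .cons e rest h₁ ⟨m, hm.trans hR⟩

theorem rec_iff {p q : A.Q} {α : Path A p q} {R : PreIpomset σ} :
    Rec α R ↔ match α with
      | .nil q => Iso (A.mu q).idOf R
      | .cons e rest => ∃ R', Rec rest R' ∧ GlueRel (A.lab e) R' R := by
  constructor
  · intro h
    cases h with
    | nil _ _ h => exact h
    | cons _ _ h₁ h₂ => exact ⟨_, h₁, h₂⟩
  · cases α with
    | nil _ => exact .nil _ R
    | cons e rest => exact fun ⟨_, h₁, h₂⟩ => .cons e rest h₁ h₂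

theorem Rec.cons_iff {e : A.E} {r : A.Q} {rest : Path A (A.tgt e) r} {R : PreIpomset σ} :
    Rec (.cons e rest) R ↔ ∃ R', Rec rest R' ∧ GlueRel (A.lab e) R' R :=
  rec_iff

theorem Rec.unique (hA : A.IsPA) {p q : A.Q} {α : Path A p q} {R R' : PreIpomset σ}
    (h : Rec α R) (h' : Rec α R') : Iso R R' := by
  induction h generalizing R' with
  | nil _ _ hR => exact hR.symm.trans (rec_iff.1 h')
  | cons e rest h₁ h₂ ih =>
    obtain ⟨R₁', h₁', m', hm'⟩ := Rec.cons_iff.1 h'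
    obtain ⟨m, hm⟩ := h₂
    obtain ⟨m'', h''⟩ := glue_congr m (.refl _) (ih h₁')
    obtain rfl := (Matching.subsingleton (hA.isIpomset e)).elim m'' m'
    exact hm.symm.trans (h''.trans hm')

theorem Rec.append (hA : A.IsPA) {p q r : A.Q} {β : Path A p q} {α : Path A q r}
    {P Q R : PreIpomset σ} (hβ : Rec β P) (hα : Rec α Q) (hR : GlueRel P Q R) :
    Rec (β.append α) R := by
  induction hβ generalizing R with
  | nil q P hP =>
    obtain ⟨m, hm⟩ := hR
    obtain ⟨m', hm'⟩ := glue_congr m hP.symm (.refl Q)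
    exact hα.iso ((iso_glue_idOf_left (hA.isConclist q).2.1 m').symm.trans (hm'.symm.trans hm))
  | cons e rest _ hglue ih =>
    obtain ⟨m, hm⟩ := hR
    obtain ⟨m₀, h₀⟩ := hglue
    obtain ⟨m', h'⟩ := glue_congr m h₀.symm (.refl Q)
    obtain ⟨m₁, m₂, h''⟩ := glue_assoc m₀ m'
    exact .cons e _ (ih hα ⟨m₁, .refl _⟩) ⟨m₂, h''.symm.trans (h'.symm.trans hm)⟩

theorem Path.exists_rec (hA : A.IsPA) {p q : A.Q} (α : Path A p q) :
    ∃ R, Rec α R ∧ Iso R.srcIface (A.mu p) ∧ Iso R.tgtIface (A.mu q) ∧ R.SrcMin ∧ R.TgtMax := by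
  induction α with
  | nil q =>
    have hd := (hA.isConclist q).2.1
    exact ⟨_, .nil q _ (.refl _), iso_srcIface_idOf (hA.isConclist q),
      iso_tgtIface_idOf (hA.isConclist q), Discrete.srcMin hd, Discrete.tgtMax hd⟩
  | cons e rest ih =>
    obtain ⟨R, hR, hsrc, htgt, hmin, hmax⟩ := ih
    obtain ⟨m⟩ := Matching.nonempty (hA.tgtIface e) hsrc
    have he := hA.isIpomset e
    exact ⟨glue _ R m, .cons e rest hR ⟨m, .refl _⟩,
      (srcIface_glue m hmin).symm.trans (hA.srcIface e),
      (tgtIface_glue m he.tgt_max).symm.trans htgt,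
      srcMin_glue m he.src_min hmin, tgtMax_glue m he.tgt_max hmax⟩

theorem Rec.srcIface (hA : A.IsPA) {p q : A.Q} {α : Path A p q} {R : PreIpomset σ}
    (h : Rec α R) : Iso R.srcIface (A.mu p) :=
  have ⟨_, h₀, hsrc, _⟩ := Path.exists_rec hA α
  (Rec.unique hA h h₀).srcIface.trans hsrc

theorem Rec.tgtIface (hA : A.IsPA) {p q : A.Q} {α : Path A p q} {R : PreIpomset σ}
    (h : Rec α R) : Iso R.tgtIface (A.mu q) :=
  have ⟨_, h₀, _, htgt, _⟩ := Path.exists_rec hA α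
  (Rec.unique hA h h₀).tgtIface.trans htgt

theorem Rec.single (hA : A.IsPA) (e : A.E) : Rec (.cons e (.nil (A.tgt e))) (A.lab e) := by
  have hC := hA.isConclist (A.tgt e)
  obtain ⟨m⟩ := Matching.nonempty (hA.tgtIface e) (iso_srcIface_idOf hC)
  exact .cons e _ (.nil _ _ (.refl _)) ⟨m, iso_glue_idOf_right hC.2.1 m⟩

/-- The position of a copy of a state in the normalized automaton: `initial` copies only emit
transitions, `final` copies only receive them, and `idle` copies carry the empty paths. -/
inductive Phase
  | initial | middle | final | idle

instance : Finite Phase :=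
  Finite.of_surjective ![.initial, .middle, .final, .idle] fun p => by
    cases p
    exacts [⟨0, rfl⟩, ⟨1, rfl⟩, ⟨2, rfl⟩, ⟨3, rfl⟩]

variable (A) in
/-- A discrete ipomset `⟨S, U, T⟩` whose conclist `U` is that of a transition label. -/
def DiscreteLabel : Type := Σ e : A.E, Set (A.lab e).carrier × Set (A.lab e).carrier

def DiscreteLabel.ipomset (c : A.DiscreteLabel) : PreIpomset σ :=
  (A.lab c.1).withIfaces c.2.1 c.2.2

variable (A) in
def CanStart (p : A.Q × Phase) (C : PreIpomset σ) : Prop :=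
  p.2 = .initial ∧ p.1 ∈ A.start ∨ p.2 = .middle ∧ C.S ≠ Set.univ

variable (A) in
def CanEnd (q : A.Q × Phase) (C : PreIpomset σ) : Prop :=
  q.2 = .final ∧ q.1 ∈ A.accept ∨ q.2 = .middle ∧ C.T ≠ Set.univ

variable (A) in
structure IsStep (p q : A.Q × Phase) (C : PreIpomset σ) : Prop where
  canStart : A.CanStart p C
  canEnd : A.CanEnd q C
  path : ∃ β : Path A p.1 q.1, Rec β C

variable (A) in
def normalize : PAutomaton σ where
  Q := A.Q × Phase
  E := {t : (A.Q × Phase) × (A.Q × Phase) × A.DiscreteLabel // A.IsStep t.1 t.2.1 t.2.2.ipomset}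
  src t := t.1.1
  tgt t := t.1.2.1
  lab t := t.1.2.2.ipomset
  mu w := A.mu w.1
  start := {w | w.1 ∈ A.start ∧ (w.2 = .initial ∨ w.2 = .idle)}
  accept := {w | w.1 ∈ A.accept ∧ (w.2 = .final ∨ w.2 = .idle)}

theorem normalize_isGST (hg : A.IsGST) : (normalize A).IsGST :=
  fun t => hg t.1.2.2.1

theorem normalize_isPA (hA : A.IsPA) (hg : A.IsGST) : (normalize A).IsPA := by
  have := hA.1
  have := hA.2.1
  have := fun e => (A.lab e).fin
  have : Finite A.DiscreteLabel := inferInstanceAs (Finite (Σ e : A.E, Set _ × Set _))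
  refine ⟨inferInstanceAs (Finite (A.Q × Phase)), Subtype.finite, fun w => hA.isConclist w.1,
    fun t => (hA.isIpomset _).withIfaces (hg _) _ _, fun t => ?_, fun t => ?_⟩
  · obtain ⟨β, hβ⟩ := t.2.path
    exact hβ.srcIface hA
  · obtain ⟨β, hβ⟩ := t.2.path
    exact hβ.tgtIface hA

theorem normalize_tgt_notMem_start (t : (normalize A).E) :
    (normalize A).tgt t ∉ (normalize A).start := by
  rintro ⟨-, hstart⟩
  rcases t.2.canEnd with ⟨h, -⟩ | ⟨h, -⟩ <;> simp [normalize, h] at hstart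

theorem normalize_src_notMem_accept (t : (normalize A).E) :
    (normalize A).src t ∉ (normalize A).accept := by
  rintro ⟨-, haccept⟩
  rcases t.2.canStart with ⟨h, -⟩ | ⟨h, -⟩ <;> simp [normalize, h] at haccept

theorem normalize_tgt_mem_accept (t : (normalize A).E) (hT : ((normalize A).lab t).T = Set.univ) :
    (normalize A).tgt t ∈ (normalize A).accept := by
  rcases t.2.canEnd with ⟨h, hq⟩ | ⟨-, hT'⟩
  · exact ⟨hq, .inl h⟩
  · exact (hT' hT).elim

theorem normalize_src_mem_start (t : (normalize A).E) (hS : ((normalize A).lab t).S = Set.univ) :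
    (normalize A).src t ∈ (normalize A).start := by
  rcases t.2.canStart with ⟨h, hp⟩ | ⟨-, hS'⟩
  · exact ⟨hp, .inl h⟩
  · exact (hS' hS).elim

theorem exists_path_of_normalize (hA : A.IsPA) {w z : (normalize A).Q}
    (π : Path (normalize A) w z) {R : PreIpomset σ} (hπ : Rec π R) :
    ∃ α : Path A (Prod.fst w) (Prod.fst z), Rec α R := by
  induction π generalizing R with
  | nil w => exact ⟨.nil w.1, .nil _ _ (rec_iff.1 hπ)⟩
  | cons t π ih =>
    obtain ⟨R', hπ', hglue⟩ := Rec.cons_iff.1 hπ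
    obtain ⟨α, hα⟩ := ih hπ'
    obtain ⟨β, hβ⟩ := t.2.path
    exact ⟨β.append α, hβ.append hA hα hglue⟩

theorem exists_label_append (hA : A.IsPA) (hg : A.IsGST) {x : A.Q} {c : A.DiscreteLabel}
    {e : A.E} {β : Path A x (A.src e)} (hβ : Rec β c.ipomset)
    (hjoin : c.ipomset.T = Set.univ ∨ (A.lab e).S = Set.univ) :
    ∃ c' : A.DiscreteLabel, Rec (β.append (.cons e (.nil _))) c'.ipomset ∧
      (c'.ipomset.S = Set.univ → c.ipomset.S = Set.univ) := by
  obtain ⟨m⟩ := Matching.nonempty (hβ.tgtIface hA) (hA.srcIface e)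
  obtain ⟨c', hc'⟩ : ∃ c' : A.DiscreteLabel, Iso (glue _ _ m) c'.ipomset := by
    rcases hjoin with hT | hS
    · exact ⟨⟨e, m.sourceImage, (A.lab e).T⟩, (iso_glue_of_T_eq_univ m (hg c.1) hT).symm⟩
    · exact ⟨⟨c.1, c.2.1, m.targetPreimage⟩, iso_glue_of_S_eq_univ m (hg e) hS⟩
  exact ⟨c', hβ.append hA (Rec.single hA e) ⟨m, hc'⟩, fun h => glue_S_eq_univ m (hc'.S_eq_univ h)⟩

/-- `β` is the block read so far; it is emitted as a transition whenever the next transition of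
`α` cannot join it. -/
theorem exists_normalize_path (hA : A.IsPA) (hg : A.IsGST) {y r : A.Q} (α : Path A y r)
    (hr : r ∈ A.accept) {x : A.Q} (i : Phase) (c : A.DiscreteLabel) (β : Path A x y)
    (hβ : Rec β c.ipomset) (hi : A.CanStart (x, i) c.ipomset) {R : PreIpomset σ}
    (hR : Rec (β.append α) R) : ∃ π : Path (normalize A) (x, i) (r, .final), Rec π R := by
  induction α generalizing x i c R with
  | nil y =>
    rw [Path.append_nil] at hR
    let t : (normalize A).E := ⟨((x, i), (y, .final), c), hi, .inl ⟨rfl, hr⟩, β, hβ⟩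
    have hC := hA.isConclist y
    obtain ⟨m⟩ := Matching.nonempty (hβ.tgtIface hA) (iso_srcIface_idOf hC)
    exact ⟨.cons t (.nil _), .cons t _ (.nil _ _ (.refl _))
      ⟨m, (iso_glue_idOf_right hC.2.1 m).trans (hβ.unique hA hR)⟩⟩
  | cons e rest ih =>
    by_cases hjoin : c.ipomset.T = Set.univ ∨ (A.lab e).S = Set.univ
    · obtain ⟨c', hβ', hS⟩ := exists_label_append hA hg hβ hjoin
      refine ih hr i c' _ hβ' ?_ (by rwa [Path.append_assoc])
      exact hi.imp id fun ⟨hmid, hS'⟩ => ⟨hmid, mt hS hS'⟩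
    · push Not at hjoin
      let t : (normalize A).E := ⟨((x, i), (A.src e, .middle), c), hi, .inr ⟨rfl, hjoin.1⟩, β, hβ⟩
      obtain ⟨R₂, hR₂, hsrc, -⟩ := Path.exists_rec hA (.cons e rest)
      obtain ⟨π, hπ⟩ := ih hr .middle ⟨e, (A.lab e).S, (A.lab e).T⟩ (.cons e (.nil _))
        (Rec.single hA e) (.inr ⟨rfl, hjoin.2⟩) hR₂
      obtain ⟨m⟩ := Matching.nonempty (hβ.tgtIface hA) hsrc
      exact ⟨.cons t π, .cons t π hπ ⟨m, (hβ.append hA hR₂ ⟨m, .refl _⟩).unique hA hR⟩⟩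

theorem lang_normalize (hA : A.IsPA) (hg : A.IsGST) : (normalize A).lang = A.lang := by
  ext R
  constructor
  · rintro ⟨w, z, π, hw, hz, hπ⟩
    obtain ⟨α, hα⟩ := exists_path_of_normalize hA π hπ
    exact ⟨w.1, z.1, α, hw.1, hz.1, hα⟩
  · rintro ⟨p, r, α, hp, hr, hα⟩
    cases α with
    | nil p =>
      exact ⟨(p, .idle), (p, .idle), .nil _, ⟨hp, .inr rfl⟩, ⟨hr, .inr rfl⟩,
        .nil _ _ (rec_iff.1 hα)⟩
    | cons e rest =>
      obtain ⟨π, hπ⟩ := exists_normalize_path hA hg rest hr .initial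
        ⟨e, (A.lab e).S, (A.lab e).T⟩ (.cons e (.nil _)) (Rec.single hA e) (.inl ⟨rfl, hp⟩) hα
      exact ⟨_, _, π, ⟨hp, .inl rfl⟩, ⟨hr, .inl rfl⟩, hπ⟩

end PAutomaton

theorem gst_conditions_abcd_general {σ : Type} (A : PAutomaton σ)
    (hA : A.IsPA) (hg : A.IsGST) :
    ∃ A' : PAutomaton σ, A'.IsPA ∧ A'.IsGST ∧
      (∀ e, A'.tgt e ∉ A'.start) ∧
      (∀ e, A'.src e ∉ A'.accept) ∧
      (∀ e, (A'.lab e).T = Set.univ → A'.tgt e ∈ A'.accept) ∧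
      (∀ e, (A'.lab e).S = Set.univ → A'.src e ∈ A'.start) ∧
      A'.lang = A.lang :=
  ⟨A.normalize, PAutomaton.normalize_isPA hA hg, PAutomaton.normalize_isGST hg,
    PAutomaton.normalize_tgt_notMem_start, PAutomaton.normalize_src_notMem_accept,
    PAutomaton.normalize_tgt_mem_accept, PAutomaton.normalize_src_mem_start,
    PAutomaton.lang_normalize hA hg⟩

/-- For every gST-automaton without silent transitions there is a
language-equivalent gST-automaton satisfying conditions (a)–(d). -/
theorem gst_conditions_abcd {σ : Type} [Finite σ] (A : PAutomaton σ)
    (hA : A.IsPA) (hg : A.IsGST) (hns : A.NoSilent) :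
    ∃ A' : PAutomaton σ, A'.IsPA ∧ A'.IsGST ∧
      (∀ e, A'.tgt e ∉ A'.start) ∧
      (∀ e, A'.src e ∉ A'.accept) ∧
      (∀ e, (A'.lab e).T = Set.univ → A'.tgt e ∈ A'.accept) ∧
      (∀ e, (A'.lab e).S = Set.univ → A'.src e ∈ A'.start) ∧
      A'.lang = A.lang :=
  gst_conditions_abcd_general A hA hg

end HDA
end

section
/- Let 𝒜 be a reduced gST-automaton and let X(𝒜) be the structure with cells (Q ⊔ E)/∼, where e ∼ s(e) if λ(e) is a terminator and e ∼ t(e) if λ(e) is a starter, with ev([q]) = μ(q) and ev([e]) = U for λ(e) = ⟨S,U,T⟩, and whose only defined face maps are δ⁰_{U∖S}([e]) = [s(e)] and δ¹_{U∖T}([e]) = [t(e)] for each transition e with λ(e) = ⟨S,U,T⟩, together with the initial and accepting cells inherited from 𝒜. Then X(𝒜) satisfies the lax precubical identity, i.e. X(𝒜) is a partial HDA; in fact no two of its nontrivial face maps are composable. -/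
open scoped Classical

/-!
Every nontrivial face of a cell of `X(𝒜)` is a state cell `[q]` that is not merged with any
transition (this is where reducedness is used), and such a cell has only its trivial face.
Hence no two nontrivial faces compose, and in the lax precubical identity one of the two faces
is trivial. If it is the first one, the face embedding is an automorphism of a conclist, hence
the identity, because the event order of a conclist is a finite strict total order.
-/

namespace HDA

open PreIpomset PAutomaton Relation

variable {σ : Type}

theorem relIso_apply_eq_self_of_acyclic {α : Type} [Finite α] {r : α → α → Prop}
    (hacyc : ∀ a, ¬ TransGen r a a) (htotal : ∀ a b, a ≠ b → r a b ∨ r b a)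
    (f : r ≃r r) (a : α) : f a = a := by
  have : Std.Irrefl (TransGen r) := ⟨hacyc⟩
  have : Std.Irrefl r := ⟨fun a h => hacyc a (.single h)⟩
  have : Std.Trichotomous r := ⟨fun a b hab hba => by_contra fun hne =>
    (htotal a b hne).elim hab hba⟩
  have : IsWellFounded α r :=
    ⟨Subrelation.wf TransGen.single (Finite.wellFounded_of_trans_of_irrefl (TransGen r))⟩
  exact congrArg (· a) (Subsingleton.elim f.toInitialSeg (InitialSeg.refl r))

namespace PreIpomset

theorem IsIpomset.conclistOf_isConclist {P : PreIpomset σ} (hP : P.IsIpomset)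
    (hd : P.Discrete) : P.conclistOf.IsConclist :=
  ⟨{ hP with
      src_min := fun _ h => absurd h (Set.notMem_empty _)
      tgt_max := fun _ h => absurd h (Set.notMem_empty _) }, hd, rfl, rfl⟩

theorem IsConclist.evord_total {U : PreIpomset σ} (hU : U.IsConclist) (a b : U.carrier)
    (hab : a ≠ b) : U.evord a b ∨ U.evord b a := by
  rcases hU.1.total a b hab with h | h | h | h
  · exact absurd h (hU.2.1 a b)
  · exact absurd h (hU.2.1 b a)
  · exact .inl h
  · exact .inr h

end PreIpomset

theorem isFaceEmbed_id (U : PreIpomset σ) : IsFaceEmbed U ∅ U id :=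
  ⟨Function.injective_id, by simp, fun _ _ => Iff.rfl, fun _ => rfl⟩

theorem IsFaceEmbed.eq_id_of_isConclist {U : PreIpomset σ} {g : U.carrier → U.carrier}
    (hU : U.IsConclist) (hg : IsFaceEmbed U ∅ U g) : g = id := by
  obtain ⟨hinj, hrange, hevord, -⟩ := hg
  have hsurj : Function.Surjective g := fun a => by
    have ha : a ∈ (∅ : Set U.carrier)ᶜ := Set.notMem_empty a
    rwa [← hrange] at ha
  have := U.fin
  funext a
  exact relIso_apply_eq_self_of_acyclic hU.1.evord_acyclic hU.evord_total
    ⟨Equiv.ofBijective g ⟨hinj, hsurj⟩, (hevord _ _).symm⟩ a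

theorem exists_isFaceEmbed_of_iso {P V : PreIpomset σ} {K : Set P.carrier}
    (h : Iso (P.restrict K) V) : ∃ g, IsFaceEmbed P Kᶜ V g := by
  obtain ⟨f, -, hevord, -, -, hlab⟩ := h
  refine ⟨fun u => (f.symm u).val, fun u v huv => f.symm.injective (Subtype.ext huv), ?_,
    fun u v => by
      have h := hevord (f.symm u) (f.symm v)
      rw [f.apply_symm_apply, f.apply_symm_apply] at h
      exact h.symm,
    fun u => by
      have h := hlab (f.symm u)
      rw [f.apply_symm_apply] at h
      exact h.symm⟩
  ext a
  simp only [compl_compl, Set.mem_range]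
  exact ⟨fun ⟨u, hu⟩ => hu ▸ (f.symm u).2, fun ha =>
    ⟨f ⟨a, ha⟩, congrArg Subtype.val (f.symm_apply_apply ⟨a, ha⟩)⟩⟩

namespace PAutomaton

variable {A : PAutomaton σ}

/-- A terminator out of `s(e)` would be the only transition out of an initial state (d, e),
and a starter into `s(e)` would make it accepting (c, b). -/
theorem Reduced.cellOfState_src (hr : A.Reduced) {e : A.E} (hS : (A.lab e).S ≠ Set.univ) :
    cellOfState A (A.src e) = Sum.inr (A.src e) := by
  obtain ⟨-, -, hsrc_acc, htgt_acc, hsrc_start, hout, -⟩ := hr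
  have hterm : ¬ ∃ e', IsTerminator (A.lab e') ∧ A.src e' = A.src e := by
    rintro ⟨e', hterm, hsrc⟩
    obtain rfl := hout e' e (hsrc_start e' hterm.2.2) hsrc.symm
    exact hS hterm.2.2
  have hstart : ¬ ∃ e', IsStarter (A.lab e') ∧ A.tgt e' = A.src e := by
    rintro ⟨e', hstart, htgt⟩
    exact hsrc_acc e (htgt ▸ htgt_acc e' hstart.2.2)
  rw [cellOfState, dif_neg hterm, dif_neg hstart]

theorem Reduced.cellOfState_tgt (hr : A.Reduced) {e : A.E} (hT : (A.lab e).T ≠ Set.univ) :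
    cellOfState A (A.tgt e) = Sum.inr (A.tgt e) := by
  obtain ⟨-, htgt_start, -, htgt_acc, hsrc_start, -, hin⟩ := hr
  have hterm : ¬ ∃ e', IsTerminator (A.lab e') ∧ A.src e' = A.tgt e := by
    rintro ⟨e', hterm, hsrc⟩
    exact htgt_start e (hsrc ▸ hsrc_start e' hterm.2.2)
  have hstart : ¬ ∃ e', IsStarter (A.lab e') ∧ A.tgt e' = A.tgt e := by
    rintro ⟨e', hstart, htgt⟩
    obtain rfl := hin e' e (htgt_acc e' hstart.2.2) htgt.symm
    exact hT hstart.2.2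
  rw [cellOfState, dif_neg hterm, dif_neg hstart]

end PAutomaton

namespace PrePHDA

def FacesNotComposable (X : PrePHDA σ) : Prop :=
  ∀ (x : X.cell) (As Bs : Set (X.ev x).carrier) (y : X.cell),
    X.face x As Bs = some y → ¬(As = ∅ ∧ Bs = ∅) →
    ∀ (C D : Set (X.ev y).carrier) (z : X.cell), X.face y C D = some z → C = ∅ ∧ D = ∅

theorem isLax_of_facesNotComposable {X : PrePHDA σ} (hconc : ∀ x, (X.ev x).IsConclist)
    (hid : ∀ x, X.face x ∅ ∅ = some x) (hX : X.FacesNotComposable) : X.IsLax := by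
  intro x A B y hxy g hg C D z hz
  by_cases htriv : A = ∅ ∧ B = ∅
  · obtain ⟨rfl, rfl⟩ := htriv
    obtain rfl : y = x := Option.some_injective _ (hxy.symm.trans (hid x))
    rw [Set.empty_union] at hg
    obtain rfl := hg.eq_id_of_isConclist (hconc y)
    simpa using hz
  · obtain ⟨rfl, rfl⟩ := hX x A B y hxy htriv C D z hz
    obtain rfl : z = y := Option.some_injective _ (hz.symm.trans (hid y))
    simpa using hxy

end PrePHDA

section XofA

variable {A : PAutomaton σ}

theorem XofA_face_self (x : (XofA A).cell) : (XofA A).face x ∅ ∅ = some x := by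
  cases x <;> exact if_pos ⟨rfl, rfl⟩

theorem XofA_face_inr_eq_some {q : A.Q} {As Bs : Set (A.mu q).carrier} {y : (XofA A).cell}
    (h : (XofA A).face (Sum.inr q) As Bs = some y) : As = ∅ ∧ Bs = ∅ ∧ y = Sum.inr q := by
  change (if As = ∅ ∧ Bs = ∅ then some (Sum.inr q) else none) = some y at h
  split_ifs at h with htriv
  exact ⟨htriv.1, htriv.2, (Option.some_inj.mp h).symm⟩

theorem XofA_face_inl_eq_some (hr : A.Reduced) {e : A.E} {As Bs : Set (A.lab e).carrier}
    {y : (XofA A).cell} (h : (XofA A).face (Sum.inl e) As Bs = some y) :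
    (As = ∅ ∧ Bs = ∅ ∧ y = Sum.inl e) ∨
    (As = (A.lab e).Sᶜ ∧ Bs = ∅ ∧ y = Sum.inr (A.src e)) ∨
    (As = ∅ ∧ Bs = (A.lab e).Tᶜ ∧ y = Sum.inr (A.tgt e)) := by
  change (if As = ∅ ∧ Bs = ∅ then some (Sum.inl e)
    else if As = (A.lab e).Sᶜ ∧ Bs = ∅ then some (cellOfState A (A.src e))
    else if As = ∅ ∧ Bs = (A.lab e).Tᶜ then some (cellOfState A (A.tgt e))
    else none) = some y at h
  split_ifs at h with htriv hsrc htgt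
  · exact .inl ⟨htriv.1, htriv.2, (Option.some_inj.mp h).symm⟩
  · obtain ⟨rfl, rfl⟩ := hsrc
    have hS : (A.lab e).S ≠ Set.univ := fun hS => htriv ⟨by rw [hS, Set.compl_univ], rfl⟩
    rw [hr.cellOfState_src hS] at h
    exact .inr (.inl ⟨rfl, rfl, (Option.some_inj.mp h).symm⟩)
  · obtain ⟨rfl, rfl⟩ := htgt
    have hT : (A.lab e).T ≠ Set.univ := fun hT => htriv ⟨rfl, by rw [hT, Set.compl_univ]⟩
    rw [hr.cellOfState_tgt hT] at h
    exact .inr (.inr ⟨rfl, rfl, (Option.some_inj.mp h).symm⟩)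

theorem XofA_face_eq_inr_of_nontrivial (hr : A.Reduced) {x : (XofA A).cell}
    {As Bs : Set ((XofA A).ev x).carrier} {y : (XofA A).cell}
    (h : (XofA A).face x As Bs = some y) (hnt : ¬(As = ∅ ∧ Bs = ∅)) :
    ∃ q, y = Sum.inr q := by
  cases x with
  | inl e =>
    rcases XofA_face_inl_eq_some hr h with ⟨hAs, hBs, -⟩ | ⟨-, -, rfl⟩ | ⟨-, -, rfl⟩
    · exact absurd ⟨hAs, hBs⟩ hnt
    · exact ⟨_, rfl⟩
    · exact ⟨_, rfl⟩
  | inr q =>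
    obtain ⟨hAs, hBs, -⟩ := XofA_face_inr_eq_some h
    exact absurd ⟨hAs, hBs⟩ hnt

theorem XofA_facesNotComposable (hr : A.Reduced) : (XofA A).FacesNotComposable := by
  intro x As Bs y hxy hnt C D z hz
  obtain ⟨q, rfl⟩ := XofA_face_eq_inr_of_nontrivial hr hxy hnt
  obtain ⟨hC, hD, -⟩ := XofA_face_inr_eq_some hz
  exact ⟨hC, hD⟩

theorem XofA_ev_isConclist (hA : A.IsPA) (hg : A.IsGST) (x : (XofA A).cell) :
    ((XofA A).ev x).IsConclist := by
  obtain ⟨-, -, hmu, hlab, -⟩ := hA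
  cases x with
  | inl e => exact (hlab e).conclistOf_isConclist (hg e)
  | inr q => exact hmu q

theorem XofA_face_isFaceEmbed (hA : A.IsPA) (hr : A.Reduced) {x : (XofA A).cell}
    {As Bs : Set ((XofA A).ev x).carrier} {y : (XofA A).cell}
    (h : (XofA A).face x As Bs = some y) :
    Disjoint As Bs ∧ ∃ g, IsFaceEmbed ((XofA A).ev x) (As ∪ Bs) ((XofA A).ev y) g := by
  obtain ⟨-, -, -, -, hsrc, htgt⟩ := hA
  cases x with
  | inl e =>
    rcases XofA_face_inl_eq_some hr h with
      ⟨rfl, rfl, rfl⟩ | ⟨rfl, rfl, rfl⟩ | ⟨rfl, rfl, rfl⟩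
    · exact ⟨Set.disjoint_empty _, id, (Set.union_empty ∅).symm ▸ isFaceEmbed_id _⟩
    · exact ⟨Set.disjoint_empty _, Set.union_empty _ ▸ exists_isFaceEmbed_of_iso (hsrc e)⟩
    · exact ⟨Set.empty_disjoint _, Set.empty_union _ ▸ exists_isFaceEmbed_of_iso (htgt e)⟩
  | inr q =>
    obtain ⟨rfl, rfl, rfl⟩ := XofA_face_inr_eq_some h
    exact ⟨Set.disjoint_empty _, id, (Set.union_empty ∅).symm ▸ isFaceEmbed_id _⟩

end XofA

theorem XofA_is_phda_general {σ : Type} (A : PAutomaton σ)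
    (hA : A.IsPA) (hg : A.IsGST) (hr : A.Reduced) :
    (XofA A).IsPHDA ∧
    (∀ (x : (XofA A).cell) (As Bs : Set ((XofA A).ev x).carrier) (y : (XofA A).cell),
      (XofA A).face x As Bs = some y → ¬(As = ∅ ∧ Bs = ∅) →
      ∀ (C D : Set ((XofA A).ev y).carrier) (z : (XofA A).cell),
        (XofA A).face y C D = some z → C = ∅ ∧ D = ∅) := by
  have hconc := XofA_ev_isConclist hA hg
  have hnc := XofA_facesNotComposable hr
  exact ⟨⟨hconc, XofA_face_self, fun _ _ _ _ => XofA_face_isFaceEmbed hA hr,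
    PrePHDA.isLax_of_facesNotComposable hconc XofA_face_self hnc⟩, hnc⟩

/-- For a reduced gST-automaton `𝒜`, the structure `X(𝒜)` is a partial
HDA (in particular it satisfies the lax precubical identity); in fact no two of its
nontrivial face maps are composable. -/
theorem XofA_is_phda {σ : Type} [Finite σ] (A : PAutomaton σ)
    (hA : A.IsPA) (hg : A.IsGST) (hr : A.Reduced) :
    (XofA A).IsPHDA ∧
    (∀ (x : (XofA A).cell) (As Bs : Set ((XofA A).ev x).carrier) (y : (XofA A).cell),
      (XofA A).face x As Bs = some y → ¬(As = ∅ ∧ Bs = ∅) →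
      ∀ (C D : Set ((XofA A).ev y).carrier) (z : (XofA A).cell),
        (XofA A).face y C D = some z → C = ∅ ∧ D = ∅) :=
  XofA_is_phda_general A hA hg hr

end HDA
end
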